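/- Let G be a finite additive abelian group with |G| = N, let Λ be a finite set of characters of G, let ρ > 0, and let B' = B(Λ, ρ/2). If S ⊆ G is a nonempty set satisfying max over non-principal characters χ of |1̂_S(χ)| < |S|·|B'|/N, then S has non-empty intersection with every translate of the Bohr neighborhood B(Λ, ρ); in particular, for every t ∈ G there exists x ∈ S with x ∈ t + B(Λ, ρ). -/

import Mathlib

/-! Put `B = B(Λ, ρ/2)`, `g = 1_B` and `h = g ∗ g(-·)`, which is supported on
`B - B ⊆ B(Λ, ρ)` and has `ĥ = |ĝ|² ≥ 0`. By Fourier inversion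
`N · (1_S ∗ h)(t) = Re Σ_χ 1̂_S(χ) |ĝ(χ)|² χ(-t)`. The principal character contributes
`|S| |B|²`; by Parseval `Σ_{χ ≠ 1} |ĝ(χ)|² = N |B| - |B|²`, so the other characters
contribute at least `-|S| |B| / N · (N |B| - |B|²)`. Hence `(1_S ∗ h)(t) ≥ |S| |B|³ / N² > 0`,
that is, `t ∈ S - (B - B)`. -/

open Finset
open scoped Classical Pointwise

/-- The unnormalized convolution `f*g(x) = Σ_{a+b=x} f(a)g(b)`. -/
def convR {G : Type*} [AddCommGroup G] [Fintype G] (f g : G → ℝ) (x : G) : ℝ :=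
  ∑ a : G, f a * g (x - a)

/-- The unnormalized Fourier transform `f̂(χ) = Σ_x f(x)χ(x)` of a real-valued function. -/
noncomputable def ft {G : Type*} [AddCommGroup G] [Fintype G] (f : G → ℝ) (χ : AddChar G ℂ) : ℂ :=
  ∑ x : G, (f x : ℂ) * χ x

/-- `f` is `α`-uniform if `|f̂(χ)| ≤ α·N` for every character `χ`. -/
def IsUniform {G : Type*} [AddCommGroup G] [Fintype G] (f : G → ℝ) (α : ℝ) : Prop :=
  ∀ χ : AddChar G ℂ, ‖ft f χ‖ ≤ α * (Fintype.card G)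

/-- Indicator function of a finite set. -/
noncomputable def indR {G : Type*} (A : Finset G) : G → ℝ := fun x => if x ∈ A then 1 else 0

/-- The Bohr neighborhood `B(Λ, ε) = {x : |1 − χ(x)| ≤ ε for all χ ∈ Λ}`. -/
noncomputable def bohr {G : Type*} [AddCommGroup G] [Fintype G]
    (Λ : Finset (AddChar G ℂ)) (ε : ℝ) : Finset G :=
  Finset.univ.filter fun x => ∀ χ ∈ Λ, ‖1 - χ x‖ ≤ ε


open ComplexConjugate

section Fourier

variable {G : Type*} [AddCommGroup G] [Fintype G]

lemma ft_convR (f g : G → ℝ) (χ : AddChar G ℂ) : ft (convR f g) χ = ft f χ * ft g χ := by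
  simp only [ft, convR, Complex.ofReal_sum, Complex.ofReal_mul, sum_mul]
  rw [sum_comm]
  refine sum_congr rfl fun a _ => ?_
  rw [← Equiv.sum_comp (Equiv.addLeft a), mul_sum]
  refine sum_congr rfl fun y _ => ?_
  simp only [Equiv.coe_addLeft, add_sub_cancel_left, AddChar.map_add_eq_mul]
  ring

lemma ft_comp_neg (f : G → ℝ) (χ : AddChar G ℂ) : ft (fun x => f (-x)) χ = conj (ft f χ) := by
  rw [ft, ← Equiv.sum_comp (Equiv.neg G)]
  simp [ft, map_sum, AddChar.map_neg_eq_conj]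

lemma ft_convR_comp_neg_self (g : G → ℝ) (χ : AddChar G ℂ) :
    ft (convR g fun x => g (-x)) χ = ((‖ft g χ‖ ^ 2 : ℝ) : ℂ) := by
  rw [ft_convR, ft_comp_neg, Complex.mul_conj']
  push_cast; rfl

lemma sum_ft_mul_apply_neg (f : G → ℝ) (t : G) :
    ∑ χ : AddChar G ℂ, ft f χ * χ (-t) = Fintype.card G * f t := by
  have horth (x : G) :
      ∑ χ : AddChar G ℂ, χ x * χ (-t) = if x = t then (Fintype.card G : ℂ) else 0 := by
    simp_rw [← AddChar.map_add_eq_mul, ← sub_eq_add_neg, AddChar.sum_apply_eq_ite, sub_eq_zero]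
  simp_rw [ft, sum_mul, mul_assoc]
  rw [sum_comm]
  simp_rw [← mul_sum, horth]
  simp [mul_comm]

lemma sum_norm_ft_sq (g : G → ℝ) :
    ∑ χ : AddChar G ℂ, ‖ft g χ‖ ^ 2 = Fintype.card G * ∑ x, g x ^ 2 := by
  have h := sum_ft_mul_apply_neg (convR g fun x => g (-x)) 0
  simp only [ft_convR_comp_neg_self, neg_zero, AddChar.map_zero_eq_one, mul_one, convR,
    zero_sub, neg_neg, ← sq] at h
  exact_mod_cast h

lemma card_mul_convR_eq_re_sum (f g : G → ℝ) (t : G) :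
    Fintype.card G * convR f (convR g fun x => g (-x)) t
      = (∑ χ : AddChar G ℂ, ft f χ * ((‖ft g χ‖ ^ 2 : ℝ) : ℂ) * χ (-t)).re := by
  simp_rw [← ft_convR_comp_neg_self, ← ft_convR, sum_ft_mul_apply_neg]
  norm_cast

lemma sub_le_re_sum_ft_mul (f : G → ℝ) (w : AddChar G ℂ → ℝ) (hw : ∀ χ, 0 ≤ w χ) {K : ℝ}
    (hK : ∀ χ, χ ≠ 1 → ‖ft f χ‖ ≤ K) (t : G) :
    (∑ x, f x) * w 1 - K * ∑ χ ∈ univ.erase 1, w χ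
      ≤ (∑ χ, ft f χ * w χ * χ (-t)).re := by
  rw [← add_sum_erase univ (fun χ => ft f χ * w χ * χ (-t)) (mem_univ 1), Complex.add_re,
    Complex.re_sum, mul_sum, sub_eq_add_neg, ← sum_neg_distrib]
  gcongr with χ hχ
  · simp [ft]
  · have hnorm : ‖ft f χ * w χ * χ (-t)‖ ≤ K * w χ := by
      rw [norm_mul, norm_mul, AddChar.norm_apply, mul_one, Complex.norm_real, Real.norm_of_nonneg (hw χ)]
      exact mul_le_mul_of_nonneg_right (hK χ (ne_of_mem_erase hχ)) (hw χ)
    exact (neg_le_neg hnorm).trans (neg_le_of_abs_le (Complex.abs_re_le_norm _))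

end Fourier

section Support

variable {G : Type*}

lemma indR_ne_zero {A : Finset G} {x : G} : indR A x ≠ 0 ↔ x ∈ A := by
  unfold indR; split_ifs with h <;> simp [h]

lemma indR_sq (A : Finset G) (x : G) : indR A x ^ 2 = indR A x := by
  unfold indR; split_ifs <;> norm_num

lemma sum_indR [Fintype G] (A : Finset G) : ∑ x, indR A x = #A := by
  simp [indR]

variable [AddCommGroup G] [Fintype G]

lemma ft_indR_one (A : Finset G) : ft (indR A) 1 = #A := by
  simp [ft, indR, apply_ite ((↑) : ℝ → ℂ)]

lemma exists_ne_zero_of_convR_ne_zero {f g : G → ℝ} {x : G} (h : convR f g x ≠ 0) :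
    ∃ a, f a ≠ 0 ∧ g (x - a) ≠ 0 := by
  obtain ⟨a, -, ha⟩ := exists_ne_zero_of_sum_ne_zero h
  exact ⟨a, left_ne_zero_of_mul ha, right_ne_zero_of_mul ha⟩

lemma exists_eq_add_sub_of_convR_indR_ne_zero {S B : Finset G} {t : G}
    (h : convR (indR S) (convR (indR B) fun x => indR B (-x)) t ≠ 0) :
    ∃ x ∈ S, ∃ b ∈ B, ∃ c ∈ B, x = t + (c - b) := by
  obtain ⟨x, hx, hconv⟩ := exists_ne_zero_of_convR_ne_zero h
  obtain ⟨b, hb, hc⟩ := exists_ne_zero_of_convR_ne_zero hconv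
  exact ⟨x, indR_ne_zero.1 hx, b, indR_ne_zero.1 hb, _, indR_ne_zero.1 hc, by abel⟩

lemma convR_indR_pos_of_norm_ft_le {S B : Finset G} (hS : S.Nonempty) (hB : B.Nonempty)
    (hft : ∀ χ : AddChar G ℂ, χ ≠ 1 → ‖ft (indR S) χ‖ ≤ #S * #B / Fintype.card G) (t : G) :
    0 < convR (indR S) (convR (indR B) fun x => indR B (-x)) t := by
  have hN : 0 < (Fintype.card G : ℝ) := by positivity
  have hparseval : ∑ χ ∈ univ.erase 1, ‖ft (indR B) χ‖ ^ 2 = Fintype.card G * #B - #B ^ 2 := by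
    rw [sum_erase_eq_sub (mem_univ _), sum_norm_ft_sq, ft_indR_one]
    simp [indR_sq, sum_indR]
  have hlower := sub_le_re_sum_ft_mul (indR S) (fun χ => ‖ft (indR B) χ‖ ^ 2)
    (fun _ => sq_nonneg _) hft t
  rw [← card_mul_convR_eq_re_sum, hparseval, sum_indR, ft_indR_one, Complex.norm_natCast]
    at hlower
  have hmain : 0 < (#S : ℝ) * #B ^ 3 / Fintype.card G := by
    have := hS.card_pos; have := hB.card_pos; positivity
  refine pos_of_mul_pos_right (hmain.trans_le (le_of_eq_of_le ?_ hlower)) hN.le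
  field_simp
  ring

end Support

section Bohr

variable {G : Type*} [AddCommGroup G] [Fintype G] {Λ : Finset (AddChar G ℂ)}

lemma zero_mem_bohr {ε : ℝ} (hε : 0 ≤ ε) : (0 : G) ∈ bohr Λ ε := by
  simpa [bohr] using fun _ _ => hε

lemma sub_mem_bohr {ε δ : ℝ} {x y : G} (hx : x ∈ bohr Λ ε) (hy : y ∈ bohr Λ δ) :
    x - y ∈ bohr Λ (ε + δ) := by
  simp only [bohr, mem_filter, mem_univ, true_and] at hx hy ⊢
  intro χ hχ
  have hrot : ‖1 - χ (x - y)‖ = ‖χ y - χ x‖ := by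
    rw [← one_mul ‖1 - χ (x - y)‖, ← AddChar.norm_apply χ y, ← norm_mul, mul_sub, mul_one,
      ← AddChar.map_add_eq_mul, add_sub_cancel]
  calc ‖1 - χ (x - y)‖ = ‖(1 - χ x) - (1 - χ y)‖ := by rw [hrot]; ring_nf
    _ ≤ ‖1 - χ x‖ + ‖1 - χ y‖ := norm_sub_le _ _
    _ ≤ ε + δ := add_le_add (hx χ hχ) (hy χ hχ)

end Bohr

/-- If `S` is nonempty and all non-principal Fourier coefficients of `1_S` are smaller than
`|S|·|B(Λ, ρ/2)|/N`, then `S` meets every translate of the Bohr neighborhood `B(Λ, ρ)`. -/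
theorem test_set_meets_bohr_translates {G : Type*} [AddCommGroup G] [Fintype G] (N : ℕ)
    (hN : Fintype.card G = N)
    (Λ : Finset (AddChar G ℂ)) (ρ : ℝ) (hρ : 0 < ρ)
    (S : Finset G) (hS : S.Nonempty)
    (hmax : ∀ χ : AddChar G ℂ, χ ≠ 1 →
      ‖ft (indR S) χ‖ < (S.card : ℝ) * ((bohr Λ (ρ / 2)).card : ℝ) / N) :
    ∀ t : G, ∃ x ∈ S, ∃ y ∈ bohr Λ ρ, x = t + y := by
  intro t
  have hB : (bohr Λ (ρ / 2)).Nonempty := ⟨0, zero_mem_bohr (by positivity)⟩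
  have hft (χ : AddChar G ℂ) (hχ : χ ≠ 1) :
      ‖ft (indR S) χ‖ ≤ #S * #(bohr Λ (ρ / 2)) / Fintype.card G := by
    rw [hN]
    exact (hmax χ hχ).le
  obtain ⟨x, hx, b, hb, c, hc, rfl⟩ :=
    exists_eq_add_sub_of_convR_indR_ne_zero (convR_indR_pos_of_norm_ft_le hS hB hft t).ne'
  exact ⟨_, hx, c - b, add_halves ρ ▸ sub_mem_bohr hc hb, rfl⟩
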